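/- For any graphon g, the triangle density satisfies τ(g) ≤ ε(g)^{3/2}, with equality for the 'clique' graphon equal to 1 on [0,√ε]² and 0 elsewhere (whose edge density is ε and triangle density is ε^{3/2}). -/

import Mathlib

open MeasureTheory Real Set

noncomputable section

def I01 : Set ℝ := Set.Icc 0 1

def IsGraphon (g : ℝ → ℝ → ℝ) : Prop :=
  Measurable (Function.uncurry g) ∧ (∀ x y, g x y = g y x) ∧ ∀ x y, g x y ∈ Set.Icc (0:ℝ) 1

def edgeDensity (g : ℝ → ℝ → ℝ) : ℝ := ∫ x in I01, ∫ y in I01, g x y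

def triDensity (g : ℝ → ℝ → ℝ) : ℝ :=
  ∫ x in I01, ∫ y in I01, ∫ z in I01, g x y * g y z * g z x

/-- The clique graphon: `1` on `[0, √ε]²`, `0` elsewhere. -/
def cliqueGraphon (ε : ℝ) (x y : ℝ) : ℝ :=
  if x ≤ Real.sqrt ε ∧ y ≤ Real.sqrt ε then 1 else 0

/-!
With the codegree `c(x, y) = ∫ g(x, z) g(z, y) dz` we have `τ(g) = ∫ g(x, y) c(x, y)`.
Cauchy–Schwarz in `z` gives `c(x, y)² ≤ s(x) s(y)` with `s(x) = ∫ g(x, z)² dz`, so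
`‖c‖₂ ≤ ∫ s = ‖g‖₂²`, and Cauchy–Schwarz in `(x, y)` gives `τ(g) ≤ ‖g‖₂ ‖c‖₂ ≤ ‖g‖₂³ ≤ ε(g)^{3/2}`,
the last step because `g² ≤ g`. The clique graphon is a product of indicators, so its densities
factor into one-dimensional integrals.
-/

open Function
open scoped ENNReal

section CauchySchwarz

variable {α : Type*} [MeasurableSpace α] {μ : Measure α}

theorem sq_integral_mul_le_integral_sq_mul_integral_sq {f h : α → ℝ} (hf : MemLp f 2 μ)
    (hh : MemLp h 2 μ) :
    (∫ a, f a * h a ∂μ) ^ 2 ≤ (∫ a, f a ^ 2 ∂μ) * ∫ a, h a ^ 2 ∂μ := by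
  have holder := integral_mul_norm_le_Lp_mul_Lq HolderConjugate.two_two
    (by simpa using hf) (by simpa using hh)
  simp only [Real.norm_eq_abs, ← abs_mul, rpow_two, sq_abs, ← sqrt_eq_rpow] at holder
  calc (∫ a, f a * h a ∂μ) ^ 2 ≤ (∫ a, |f a * h a| ∂μ) ^ 2 := by
        rw [← sq_abs]
        exact pow_le_pow_left₀ (abs_nonneg _) abs_integral_le_integral_abs 2
    _ ≤ (√(∫ a, f a ^ 2 ∂μ) * √(∫ a, h a ^ 2 ∂μ)) ^ 2 :=
        pow_le_pow_left₀ (integral_nonneg fun _ ↦ abs_nonneg _) holder 2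
    _ = (∫ a, f a ^ 2 ∂μ) * ∫ a, h a ^ 2 ∂μ := by
        rw [mul_pow, sq_sqrt (integral_nonneg fun _ ↦ sq_nonneg _),
          sq_sqrt (integral_nonneg fun _ ↦ sq_nonneg _)]

end CauchySchwarz

section Codegree

variable {α : Type*} [MeasurableSpace α] {μ : Measure α} {g : α → α → ℝ}

theorem memLp_uncurry [IsFiniteMeasure μ] (hg : Measurable (uncurry g))
    (hg1 : ∀ x y, |g x y| ≤ 1) (p : ℝ≥0∞) : MemLp (uncurry g) p (μ.prod μ) :=
  .of_bound hg.aestronglyMeasurable 1 (ae_of_all _ fun q ↦ hg1 q.1 q.2)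

def codegree (μ : Measure α) (g : α → α → ℝ) (x y : α) : ℝ := ∫ z, g x z * g z y ∂μ

theorem codegree_comm (hsymm : ∀ x y, g x y = g y x) (x y : α) :
    codegree μ g x y = codegree μ g y x := by
  unfold codegree
  congr 1 with z
  rw [hsymm x z, hsymm z y, mul_comm]

theorem stronglyMeasurable_codegree [SFinite μ] (hg : Measurable (uncurry g)) :
    StronglyMeasurable (uncurry (codegree μ g)) := by
  have h : Measurable fun q : (α × α) × α ↦ g q.1.1 q.2 * g q.2 q.1.2 :=
    (hg.comp (measurable_fst.fst.prodMk measurable_snd)).mul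
      (hg.comp (measurable_snd.prodMk measurable_fst.snd))
  exact h.stronglyMeasurable.integral_prod_right'

theorem abs_codegree_le [IsFiniteMeasure μ] (hg1 : ∀ x y, |g x y| ≤ 1) (x y : α) :
    |codegree μ g x y| ≤ μ.real univ := by
  have h : ∀ z, ‖g x z * g z y‖ ≤ 1 := fun z ↦ by
    rw [norm_mul]; exact mul_le_one₀ (hg1 x z) (abs_nonneg _) (hg1 z y)
  simpa [codegree] using norm_integral_le_of_norm_le_const (μ := μ) (ae_of_all _ h)

theorem memLp_codegree [IsFiniteMeasure μ] (hg : Measurable (uncurry g))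
    (hg1 : ∀ x y, |g x y| ≤ 1) (p : ℝ≥0∞) :
    MemLp (uncurry (codegree μ g)) p (μ.prod μ) :=
  .of_bound (stronglyMeasurable_codegree hg).aestronglyMeasurable _
    (ae_of_all _ fun q ↦ abs_codegree_le hg1 q.1 q.2)

theorem sq_codegree_le [IsFiniteMeasure μ] (hg : Measurable (uncurry g))
    (hsymm : ∀ x y, g x y = g y x) (hg1 : ∀ x y, |g x y| ≤ 1) (x y : α) :
    codegree μ g x y ^ 2 ≤ (∫ z, g x z ^ 2 ∂μ) * ∫ z, g y z ^ 2 ∂μ := by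
  have hslice (x : α) : MemLp (g x) 2 μ :=
    .of_bound (hg.comp measurable_prodMk_left).aestronglyMeasurable 1 (ae_of_all _ (hg1 x))
  have h : codegree μ g x y = ∫ z, g x z * g y z ∂μ := by
    unfold codegree
    congr 1 with z
    rw [hsymm z y]
  rw [h]
  exact sq_integral_mul_le_integral_sq_mul_integral_sq (hslice x) (hslice y)

theorem integral_sq_codegree_le [IsFiniteMeasure μ] (hg : Measurable (uncurry g))
    (hsymm : ∀ x y, g x y = g y x) (hg1 : ∀ x y, |g x y| ≤ 1) :
    ∫ q, codegree μ g q.1 q.2 ^ 2 ∂μ.prod μ ≤ (∫ q, g q.1 q.2 ^ 2 ∂μ.prod μ) ^ 2 := by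
  have hg2 : Integrable (fun q : α × α ↦ g q.1 q.2 ^ 2) (μ.prod μ) :=
    (memLp_uncurry hg hg1 2).integrable_sq
  calc ∫ q, codegree μ g q.1 q.2 ^ 2 ∂μ.prod μ
      ≤ ∫ q, (∫ z, g q.1 z ^ 2 ∂μ) * ∫ z, g q.2 z ^ 2 ∂μ ∂μ.prod μ :=
        integral_mono (memLp_codegree hg hg1 2).integrable_sq
          (hg2.integral_prod_left.mul_prod hg2.integral_prod_left)
          fun q ↦ sq_codegree_le hg hsymm hg1 q.1 q.2
    _ = (∫ q, g q.1 q.2 ^ 2 ∂μ.prod μ) ^ 2 := by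
        rw [integral_prod_mul (fun x ↦ ∫ z, g x z ^ 2 ∂μ) (fun x ↦ ∫ z, g x z ^ 2 ∂μ), ← sq,
          integral_integral hg2]

theorem sq_integral_triangle_le [IsFiniteMeasure μ] (hg : Measurable (uncurry g))
    (hsymm : ∀ x y, g x y = g y x) (hg1 : ∀ x y, |g x y| ≤ 1) :
    (∫ x, ∫ y, ∫ z, g x y * g y z * g z x ∂μ ∂μ ∂μ) ^ 2 ≤
      (∫ q, g q.1 q.2 ^ 2 ∂μ.prod μ) ^ 3 := by
  have hgL2 : MemLp (uncurry g) 2 (μ.prod μ) := memLp_uncurry hg hg1 2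
  have hcodeg (x y : α) : ∫ z, g x y * g y z * g z x ∂μ = g x y * codegree μ g x y := by
    rw [codegree_comm hsymm, codegree, ← integral_const_mul]
    simp only [mul_assoc]
  have hint : Integrable (fun q : α × α ↦ g q.1 q.2 * codegree μ g q.1 q.2) (μ.prod μ) :=
    hgL2.integrable_mul (memLp_codegree hg hg1 2)
  simp_rw [hcodeg]
  rw [integral_integral (f := fun x y ↦ g x y * codegree μ g x y) hint]
  calc (∫ q, g q.1 q.2 * codegree μ g q.1 q.2 ∂μ.prod μ) ^ 2
      ≤ (∫ q, g q.1 q.2 ^ 2 ∂μ.prod μ) * ∫ q, codegree μ g q.1 q.2 ^ 2 ∂μ.prod μ :=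
        sq_integral_mul_le_integral_sq_mul_integral_sq hgL2 (memLp_codegree hg hg1 2)
    _ ≤ (∫ q, g q.1 q.2 ^ 2 ∂μ.prod μ) * (∫ q, g q.1 q.2 ^ 2 ∂μ.prod μ) ^ 2 :=
        mul_le_mul_of_nonneg_left (integral_sq_codegree_le hg hsymm hg1)
          (integral_nonneg fun _ ↦ sq_nonneg _)
    _ = (∫ q, g q.1 q.2 ^ 2 ∂μ.prod μ) ^ 3 := by ring

theorem integral_triangle_le_rpow [IsFiniteMeasure μ] (hg : Measurable (uncurry g))
    (hsymm : ∀ x y, g x y = g y x) (hg01 : ∀ x y, g x y ∈ Icc (0 : ℝ) 1) :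
    ∫ x, ∫ y, ∫ z, g x y * g y z * g z x ∂μ ∂μ ∂μ ≤ (∫ x, ∫ y, g x y ∂μ ∂μ) ^ ((3 : ℝ) / 2) := by
  have hg1 (x y : α) : |g x y| ≤ 1 := abs_le.2 ⟨by linarith [(hg01 x y).1], (hg01 x y).2⟩
  have hgL2 : MemLp (uncurry g) 2 (μ.prod μ) := memLp_uncurry hg hg1 2
  set τ := ∫ x, ∫ y, ∫ z, g x y * g y z * g z x ∂μ ∂μ ∂μ
  set e₂ := ∫ q, g q.1 q.2 ^ 2 ∂μ.prod μ
  have he₂ : 0 ≤ e₂ := integral_nonneg fun _ ↦ sq_nonneg _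
  have he₂_le : e₂ ≤ ∫ x, ∫ y, g x y ∂μ ∂μ := by
    rw [integral_integral (hgL2.integrable one_le_two)]
    exact integral_mono hgL2.integrable_sq (hgL2.integrable one_le_two)
      fun q ↦ sq_le (hg01 q.1 q.2).1 (hg01 q.1 q.2).2
  calc τ ≤ √(τ ^ 2) := by rw [sqrt_sq_eq_abs]; exact le_abs_self τ
    _ ≤ √(e₂ ^ 3) := sqrt_le_sqrt (sq_integral_triangle_le hg hsymm hg1)
    _ = e₂ ^ ((3 : ℝ) / 2) := by
        rw [sqrt_eq_rpow, ← rpow_natCast, ← rpow_mul he₂]; norm_num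
    _ ≤ _ := rpow_le_rpow he₂ he₂_le (by norm_num)

end Codegree

section Clique

variable {ε : ℝ}

theorem cliqueGraphon_eq_indicator_mul (x y : ℝ) :
    cliqueGraphon ε x y = (Iic √ε).indicator 1 x * (Iic √ε).indicator 1 y := by
  by_cases hx : x ≤ √ε <;> by_cases hy : y ≤ √ε <;> simp [cliqueGraphon, hx, hy]

theorem cliqueGraphon_triangle_eq_indicator_mul (x y z : ℝ) :
    cliqueGraphon ε x y * cliqueGraphon ε y z * cliqueGraphon ε z x =
      (Iic √ε).indicator 1 x * ((Iic √ε).indicator 1 y * (Iic √ε).indicator 1 z) := by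
  by_cases hx : x ≤ √ε <;> by_cases hy : y ≤ √ε <;> by_cases hz : z ≤ √ε <;>
    simp [cliqueGraphon, hx, hy, hz]

theorem setIntegral_I01_indicator_Iic {c : ℝ} (hc : c ∈ Icc (0 : ℝ) 1) :
    ∫ t in I01, (Iic c).indicator 1 t = c := by
  have h : I01 ∩ Iic c = Icc 0 c := by
    ext t
    simp only [I01, mem_inter_iff, mem_Icc, mem_Iic]
    exact ⟨fun h ↦ ⟨h.1.1, h.2⟩, fun h ↦ ⟨⟨h.1, h.2.trans hc.2⟩, h.2⟩⟩
  simp [setIntegral_indicator measurableSet_Iic, h, hc.1]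

theorem sqrt_mem_Icc_zero_one (hε : ε ∈ Icc (0 : ℝ) 1) : √ε ∈ Icc (0 : ℝ) 1 :=
  ⟨sqrt_nonneg ε, sqrt_le_one.2 hε.2⟩

theorem edgeDensity_cliqueGraphon (hε : ε ∈ Icc (0 : ℝ) 1) :
    edgeDensity (cliqueGraphon ε) = ε := by
  simp_rw [edgeDensity, cliqueGraphon_eq_indicator_mul, integral_const_mul, integral_mul_const,
    setIntegral_I01_indicator_Iic (sqrt_mem_Icc_zero_one hε), mul_self_sqrt hε.1]

theorem triDensity_cliqueGraphon (hε : ε ∈ Icc (0 : ℝ) 1) :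
    triDensity (cliqueGraphon ε) = ε ^ ((3 : ℝ) / 2) := by
  simp_rw [triDensity, cliqueGraphon_triangle_eq_indicator_mul, integral_const_mul,
    integral_mul_const,
    setIntegral_I01_indicator_Iic (sqrt_mem_Icc_zero_one hε)]
  rw [sqrt_eq_rpow, ← rpow_add' hε.1, ← rpow_add' hε.1] <;> norm_num

end Clique

theorem kruskal_katona_graphon :
    (∀ g : ℝ → ℝ → ℝ, IsGraphon g → triDensity g ≤ edgeDensity g ^ ((3:ℝ)/2)) ∧
    ∀ ε ∈ Set.Icc (0:ℝ) 1,
      edgeDensity (cliqueGraphon ε) = ε ∧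
      triDensity (cliqueGraphon ε) = ε ^ ((3:ℝ)/2) := by
  refine ⟨fun g ⟨hg, hsymm, hg01⟩ ↦ ?_, fun ε hε ↦
    ⟨edgeDensity_cliqueGraphon hε, triDensity_cliqueGraphon hε⟩⟩
  exact integral_triangle_le_rpow (μ := volume.restrict (Icc 0 1)) hg hsymm hg01
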